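/- For every fixed positive integer n there exists a real number L such that, as m → ∞, all three sequences m ↦ ln N(m,n)/(m·n), m ↦ ln C(m,n)/(m·n), and m ↦ ln Γ(m,n)/(m·n) converge to L. (Corollary: f(∞,n) = f_C(∞,n) = f_Γ(∞,n); when the width is infinite, the grid graphs on the plane, the cylinder and the twisted cylinder are equivalent.) -/

import Mathlib

open SimpleGraph Filter Real Topology

open Classical in
/-- Number of independent sets (vertex subsets with no two adjacent vertices,
the empty set included) of a finite simple graph. -/
noncomputable def numIndep {V : Type*} [Fintype V] (G : SimpleGraph V) : ℕ :=
  (Finset.univ.filter fun s : Finset V => ∀ u ∈ s, ∀ v ∈ s, ¬ G.Adj u v).card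

/-- `N(m,n)`: number of independent sets of the `m × n` grid graph, the box
product of the path graphs on `m` and `n` vertices. -/
noncomputable def gridN (m n : ℕ) : ℕ :=
  numIndep (pathGraph m □ pathGraph n)


/-- `C(m,n)`: number of independent sets of the `m × n` cylindrical grid graph,
the box product of the cycle graph on `m` vertices with the path graph on `n`
vertices. -/
noncomputable def cylC (m n : ℕ) : ℕ :=
  numIndep (cycleGraph m □ pathGraph n)


/-- The `m × n` twisted cylindrical grid graph: vertices `0, …, m*n - 1`, with
`i` and `j` adjacent iff `|i - j| = 1` or `|i - j| = m`. -/
noncomputable def twistGrid (m n : ℕ) : SimpleGraph (Fin (m * n)) :=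
  SimpleGraph.fromRel (fun i j => i.val + 1 = j.val ∨ i.val + m = j.val)

/-- `Γ(m,n)`: number of independent sets of the `m × n` twisted cylindrical grid graph. -/
noncomputable def twistGamma (m n : ℕ) : ℕ := numIndep (twistGrid m n)

/-!
`m ↦ log N(m,n)` is subadditive (cut an `(a+b) × n` grid into an `a × n` and a `b × n` one),
so by Fekete's lemma `log N(m,n) / m` converges. Both other families are squeezed between
consecutive grids: deleting the wrap-around edges gives `C(m,n), Γ(m,n) ≤ N(m,n)`, and an
`m × n` grid embeds, as an induced subgraph, in the `(m+1) × n` cylinder and twisted cylinder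
(leave one column out), so `N(m-1,n) ≤ C(m,n), Γ(m,n)`.
-/

section IndependentSets

variable {V W U : Type*} [Fintype V] [Fintype W] [Fintype U]

lemma numIndep_pos (G : SimpleGraph V) : 0 < numIndep G :=
  Finset.card_pos.mpr ⟨∅, by simp⟩

lemma numIndep_le_of_comap_le {G : SimpleGraph V} {H : SimpleGraph W} (f : V ↪ W)
    (h : H.comap f ≤ G) : numIndep G ≤ numIndep H := by
  refine Finset.card_le_card_of_injOn (Finset.map f) ?_ (Finset.map_injective f).injOn
  intro s hs
  simp only [Finset.coe_filter, Finset.mem_univ, true_and, Set.mem_ofPred_eq,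
    Finset.mem_map] at hs ⊢
  rintro _ ⟨u, hu, rfl⟩ _ ⟨v, hv, rfl⟩ huv
  exact hs u hu v hv (h huv)

lemma numIndep_antitone : Antitone (numIndep : SimpleGraph V → ℕ) :=
  fun _ _ h => numIndep_le_of_comap_le (Function.Embedding.refl V) h

-- An independent set of `G` is determined by its traces on the two covering families.
lemma numIndep_le_mul_of_range_cover (G : SimpleGraph U) (f : V → U) (g : W → U)
    (hfg : ∀ u, u ∈ Set.range f ∨ u ∈ Set.range g) :
    numIndep G ≤ numIndep (G.comap f) * numIndep (G.comap g) := by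
  classical
  rw [numIndep, numIndep, numIndep, ← Finset.card_product]
  refine Finset.card_le_card_of_injOn
    (fun s => (({v | f v ∈ s} : Finset V), ({w | g w ∈ s} : Finset W)))
    (fun s hs => ?_) (fun s _ t _ hst => ?_)
  · simp only [Finset.coe_filter, Finset.coe_product, Finset.mem_univ, true_and,
      Set.mem_ofPred_eq, Set.mem_prod, Finset.mem_filter, comap_adj] at hs ⊢
    exact ⟨fun a ha b hb => hs _ ha _ hb, fun a ha b hb => hs _ ha _ hb⟩
  · simp only [Prod.mk.injEq, Finset.ext_iff, Finset.mem_filter, Finset.mem_univ,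
      true_and] at hst
    ext u
    rcases hfg u with ⟨v, rfl⟩ | ⟨w, rfl⟩
    exacts [hst.1 v, hst.2 w]

end IndependentSets

lemma comap_prodMap_boxProd {α α' β β' : Type*} (G : SimpleGraph α') (H : SimpleGraph β')
    {f : α → α'} {g : β → β'} (hf : f.Injective) (hg : g.Injective) :
    (G □ H).comap (Prod.map f g) = G.comap f □ H.comap g := by
  ext ⟨a, b⟩ ⟨a', b'⟩
  simp [boxProd_adj, hf.eq_iff, hg.eq_iff]

lemma boxProd_mono_left {α β : Type*} {G G' : SimpleGraph α} (H : SimpleGraph β) (h : G ≤ G') :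
    (G □ H) ≤ (G' □ H) := by
  rintro ⟨a, b⟩ ⟨a', b'⟩ hadj
  rw [boxProd_adj] at hadj ⊢
  exact hadj.imp_left fun hG => ⟨h hG.1, hG.2⟩

lemma comap_castAdd_pathGraph (a b : ℕ) :
    (pathGraph (a + b)).comap (Fin.castAdd b) = pathGraph a := by
  ext i j
  simp [pathGraph_adj]

lemma comap_natAdd_pathGraph (a b : ℕ) :
    (pathGraph (a + b)).comap (Fin.natAdd a) = pathGraph b := by
  ext i j
  simp [pathGraph_adj, Nat.add_assoc]

lemma comap_castSucc_cycleGraph_le (m : ℕ) :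
    (cycleGraph (m + 1)).comap Fin.castSucc ≤ pathGraph m := by
  have succ_eq_of_sub_eq_one {i j : Fin m} (h : (i.castSucc - j.castSucc : Fin (m + 1)).val = 1) :
      j.val + 1 = i.val := by
    rcases le_or_gt j.castSucc i.castSucc with hle | hlt
    · rw [Fin.coe_sub_iff_le.mpr hle] at h
      simp only [Fin.val_castSucc] at h
      omega
    · rw [Fin.coe_sub_iff_lt.mpr hlt] at h
      simp only [Fin.val_castSucc] at h
      omega
  intro i j h
  rw [comap_adj, cycleGraph_adj'] at h
  rw [pathGraph_adj]
  exact h.symm.imp succ_eq_of_sub_eq_one succ_eq_of_sub_eq_one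

lemma gridN_add_le_mul (a b n : ℕ) : gridN (a + b) n ≤ gridN a n * gridN b n := by
  have hcover (p : Fin (a + b) × Fin n) :
      p ∈ Set.range (Prod.map (Fin.castAdd b) id) ∨
        p ∈ Set.range (Prod.map (Fin.natAdd a) id) := by
    obtain ⟨i, j⟩ := p
    induction i using Fin.addCases
    exacts [Or.inl ⟨(_, j), rfl⟩, Or.inr ⟨(_, j), rfl⟩]
  have := numIndep_le_mul_of_range_cover (pathGraph (a + b) □ pathGraph n) _ _ hcover
  rwa [comap_prodMap_boxProd _ _ (Fin.castAdd_injective a b) Function.injective_id,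
    comap_prodMap_boxProd _ _ (Fin.natAdd_injective b a) Function.injective_id,
    SimpleGraph.comap_id, comap_castAdd_pathGraph, comap_natAdd_pathGraph] at this

lemma cylC_le_gridN (m n : ℕ) : cylC m n ≤ gridN m n :=
  numIndep_antitone (boxProd_mono_left _ pathGraph_le_cycleGraph)

lemma gridN_le_cylC_succ (m n : ℕ) : gridN m n ≤ cylC (m + 1) n := by
  have hinj := (Fin.castSucc_injective m).prodMap (Function.injective_id (α := Fin n))
  refine numIndep_le_of_comap_le ⟨_, hinj⟩ ?_
  rw [Function.Embedding.coeFn_mk, comap_prodMap_boxProd _ _ (Fin.castSucc_injective m)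
    Function.injective_id, SimpleGraph.comap_id]
  exact boxProd_mono_left _ (comap_castSucc_cycleGraph_le m)

/-- Cell `(r, q)` of the `m × n` grid (column `r`, row `q`) is vertex `r + m * q` of the
twisted cylinder. -/
def gridIndex (m n : ℕ) : Fin m × Fin n ≃ Fin (m * n) :=
  (Equiv.prodComm _ _).trans (finProdFinEquiv.trans (finCongr (Nat.mul_comm n m)))

lemma gridIndex_val {m n : ℕ} (p : Fin m × Fin n) : (gridIndex m n p : ℕ) = p.1 + m * p.2 := by
  simp [gridIndex]

lemma pathGraph_boxProd_le_comap_twistGrid (m n : ℕ) :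
    (pathGraph m □ pathGraph n) ≤ (twistGrid m n).comap (gridIndex m n) := by
  rintro ⟨r, q⟩ ⟨r', q'⟩ h
  simp only [boxProd_adj, pathGraph_adj, Fin.ext_iff] at h
  simp only [comap_adj, twistGrid, fromRel_adj, ne_eq, Fin.ext_iff, gridIndex_val]
  rcases h with ⟨h | h, h'⟩ | ⟨h | h, h'⟩ <;> simp only [← h, ← h', Nat.mul_succ] <;> omega

lemma Nat.eq_and_eq_of_add_mul_eq_add_mul {M a b q q' : ℕ} (ha : a < M) (hb : b < M)
    (h : a + M * q = b + M * q') : a = b ∧ q = q' := by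
  have hM : 0 < M := by omega
  obtain ⟨hq, ha⟩ := (Nat.div_mod_unique hM).mpr ⟨h, ha⟩
  obtain ⟨hq', hb⟩ := (Nat.div_mod_unique hM).mpr ⟨rfl, hb⟩
  exact ⟨ha.symm.trans hb, hq.symm.trans hq'⟩

lemma comap_twistGrid_succ_le (m n : ℕ) :
    (twistGrid (m + 1) n).comap
        (fun p : Fin m × Fin n => gridIndex (m + 1) n (p.1.castSucc, p.2)) ≤
      (pathGraph m □ pathGraph n) := by
  have step {a b c d : ℕ} (ha : a < m) (hb : b < m)
      (h : a + (m + 1) * c + 1 = b + (m + 1) * d) : a + 1 = b ∧ c = d :=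
    Nat.eq_and_eq_of_add_mul_eq_add_mul (M := m + 1) (by omega) (by omega) (by omega)
  have jump {a b c d : ℕ} (ha : a < m) (hb : b < m)
      (h : a + (m + 1) * c + (m + 1) = b + (m + 1) * d) : a = b ∧ c + 1 = d :=
    Nat.eq_and_eq_of_add_mul_eq_add_mul (M := m + 1) (q := c + 1) (by omega) (by omega)
      (by rw [Nat.mul_succ]; omega)
  rintro ⟨r, q⟩ ⟨r', q'⟩ ⟨-, h⟩
  simp only [gridIndex_val, Fin.val_castSucc] at h
  simp only [boxProd_adj, pathGraph_adj, Fin.ext_iff]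
  rcases h with (h | h) | (h | h)
  · have := step r.isLt r'.isLt h; omega
  · have := jump r.isLt r'.isLt h; omega
  · have := step r'.isLt r.isLt h; omega
  · have := jump r'.isLt r.isLt h; omega

lemma twistGamma_le_gridN (m n : ℕ) : twistGamma m n ≤ gridN m n :=
  numIndep_le_of_comap_le (gridIndex m n).symm.toEmbedding fun k k' hk => by
    simpa using pathGraph_boxProd_le_comap_twistGrid m n hk

lemma gridN_le_twistGamma_succ (m n : ℕ) : gridN m n ≤ twistGamma (m + 1) n :=
  numIndep_le_of_comap_le ⟨_, (gridIndex (m + 1) n).injective.comp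
    ((Fin.castSucc_injective m).prodMap Function.injective_id)⟩ (comap_twistGrid_succ_le m n)

lemma tendsto_div_natCast_of_sandwich {u v : ℕ → ℝ} {ℓ : ℝ}
    (hu : Tendsto (fun m => u m / m) atTop (𝓝 ℓ))
    (hlo : ∀ m, u m ≤ v (m + 1)) (hhi : ∀ m, v (m + 1) ≤ u (m + 1)) :
    Tendsto (fun m => v m / m) atTop (𝓝 ℓ) := by
  rw [← tendsto_add_atTop_iff_nat 1]
  have hshift : Tendsto (fun m : ℕ => u m / ((m + 1 : ℕ) : ℝ)) atTop (𝓝 ℓ) := by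
    have := hu.mul (tendsto_natCast_div_add_atTop (1 : ℝ))
    rw [mul_one] at this
    refine this.congr' ?_
    filter_upwards [eventually_ne_atTop 0] with m hm
    field_simp
    push_cast
    ring
  refine tendsto_of_tendsto_of_tendsto_of_le_of_le hshift
    ((tendsto_add_atTop_iff_nat 1).mpr hu) (fun m => ?_) (fun m => ?_)
  · exact div_le_div_of_nonneg_right (hlo m) (Nat.cast_nonneg _)
  · exact div_le_div_of_nonneg_right (hhi m) (Nat.cast_nonneg _)

lemma subadditive_log_gridN (n : ℕ) : Subadditive fun m => Real.log (gridN m n) := by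
  intro a b
  have hpos (m : ℕ) : (0 : ℝ) < gridN m n := mod_cast numIndep_pos _
  rw [← Real.log_mul (hpos a).ne' (hpos b).ne']
  exact Real.log_le_log (hpos _) (mod_cast gridN_add_le_mul a b n)

theorem wide_strips_equivalent_general (n : ℕ) :
    ∃ L : ℝ,
      Tendsto (fun m : ℕ => Real.log (gridN m n) / ((m : ℝ) * (n : ℝ))) atTop (𝓝 L) ∧
      Tendsto (fun m : ℕ => Real.log (cylC m n) / ((m : ℝ) * (n : ℝ))) atTop (𝓝 L) ∧
      Tendsto (fun m : ℕ => Real.log (twistGamma m n) / ((m : ℝ) * (n : ℝ))) atTop (𝓝 L) := by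
  have hsub := subadditive_log_gridN n
  have hN := hsub.tendsto_lim ⟨0, by
    rintro _ ⟨m, rfl⟩
    exact div_nonneg (Real.log_natCast_nonneg _) m.cast_nonneg⟩
  have log_mono {X Y : ℕ} (hX : 0 < X) (h : X ≤ Y) : Real.log X ≤ Real.log Y :=
    Real.log_le_log (mod_cast hX) (mod_cast h)
  have hC := tendsto_div_natCast_of_sandwich (v := fun m => Real.log (cylC m n)) hN
    (fun m => log_mono (numIndep_pos _) (gridN_le_cylC_succ m n))
    (fun m => log_mono (numIndep_pos _) (cylC_le_gridN (m + 1) n))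
  have hΓ := tendsto_div_natCast_of_sandwich (v := fun m => Real.log (twistGamma m n)) hN
    (fun m => log_mono (numIndep_pos _) (gridN_le_twistGamma_succ m n))
    (fun m => log_mono (numIndep_pos _) (twistGamma_le_gridN (m + 1) n))
  refine ⟨hsub.lim / n, ?_, ?_, ?_⟩ <;> simp only [← div_div]
  exacts [hN.div_const _, hC.div_const _, hΓ.div_const _]

theorem wide_strips_equivalent (n : ℕ) (hn : 0 < n) :
    ∃ L : ℝ,
      Tendsto (fun m : ℕ => Real.log (gridN m n) / ((m : ℝ) * (n : ℝ))) atTop (𝓝 L) ∧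
      Tendsto (fun m : ℕ => Real.log (cylC m n) / ((m : ℝ) * (n : ℝ))) atTop (𝓝 L) ∧
      Tendsto (fun m : ℕ => Real.log (twistGamma m n) / ((m : ℝ) * (n : ℝ))) atTop (𝓝 L) :=
  wide_strips_equivalent_general n
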